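/- Let U = {upper-triangular block matrices diag-type [[λ², x, y],[0, λ⁻¹],[0, λ⁻¹]] : λ > 0, x, y ∈ R} and L = {[[det h, 0],[n, h]] : n ∈ R², h ∈ SL₂^±(R)} be the two subgroups of SL₃(R). Then the product set UL equals {g ∈ SL₃(R) : g⁻¹E₁ ∉ E₁^⊥}, and the decomposition g = uℓ with u ∈ U, ℓ ∈ L is unique (U ∩ L = {Id}). -/

import Mathlib

/-! For `det g = 1` the `(0, 0)` entry of `g⁻¹` is the lower-right `2 × 2` minor of `g`; for
`g = u l` that block is `λ⁻¹ h`, with determinant `λ⁻² det h ≠ 0`. Conversely, if the minor `c` is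
nonzero, `λ = |c|^(-1/2)` puts `h = λ • block` in `SL₂^±`, `n` and `(x, y)` are read off the first
column and row, and the top-left entry is then forced by `det g = 1`, because the determinant is
affine in that entry with slope the (nonzero) minor. For uniqueness, `|det|` of the block determines
`λ`, hence `h` and `n`, and the first row determines `(x, y)` because `h` is invertible. -/

noncomputable section

def Uset : Set (Matrix (Fin 3) (Fin 3) ℝ) :=
  {m | ∃ lam x y : ℝ, 0 < lam ∧
    m = !![lam ^ 2, x, y; 0, lam⁻¹, 0; 0, 0, lam⁻¹]}

def Lset : Set (Matrix (Fin 3) (Fin 3) ℝ) :=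
  {m | ∃ (h : Matrix (Fin 2) (Fin 2) ℝ) (n : Fin 2 → ℝ),
    (h.det = 1 ∨ h.det = -1) ∧
    m = !![h.det, 0, 0; n 0, h 0 0, h 0 1; n 1, h 1 0, h 1 1]}

namespace Matrix

variable {n : ℕ}

theorem inv_apply_zero_zero {K : Type*} [Field K] (A : Matrix (Fin (n + 1)) (Fin (n + 1)) K) :
    A⁻¹ 0 0 = A.det⁻¹ * (A.submatrix Fin.succ Fin.succ).det := by
  rw [inv_def, smul_apply, adjugate_fin_succ_eq_det_submatrix, Ring.inverse_eq_inv']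
  simp

variable {R : Type*} [CommRing R]

theorem det_sub_det_of_succ_rows_eq {A B : Matrix (Fin (n + 1)) (Fin (n + 1)) R}
    (hrows : ∀ (i : Fin n) j, A i.succ j = B i.succ j)
    (hrow0 : ∀ j : Fin n, A 0 j.succ = B 0 j.succ) :
    A.det - B.det = (A 0 0 - B 0 0) * (A.submatrix Fin.succ Fin.succ).det := by
  have hminor (f : Fin n → Fin (n + 1)) : A.submatrix Fin.succ f = B.submatrix Fin.succ f :=
    ext fun i j => hrows i (f j)
  simp only [det_succ_row_zero A, det_succ_row_zero B, Fin.sum_univ_succ, hminor, hrow0,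
    Fin.succAbove_zero, Fin.val_zero, pow_zero]
  ring

theorem eq_of_det_eq_of_succ_rows_eq [IsDomain R] {A B : Matrix (Fin (n + 1)) (Fin (n + 1)) R}
    (hdet : A.det = B.det) (hminor : (A.submatrix Fin.succ Fin.succ).det ≠ 0)
    (hrows : ∀ (i : Fin n) j, A i.succ j = B i.succ j)
    (hrow0 : ∀ j : Fin n, A 0 j.succ = B 0 j.succ) :
    A = B := by
  have h00 : A 0 0 = B 0 0 := by
    have := det_sub_det_of_succ_rows_eq hrows hrow0
    rw [hdet, sub_self, eq_comm, mul_eq_zero] at this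
    exact sub_eq_zero.mp (this.resolve_right hminor)
  ext i j
  exact Fin.cases (Fin.cases h00 hrow0 j) (fun i => hrows i j) i

end Matrix

open Matrix

def uMat (lam x y : ℝ) : Matrix (Fin 3) (Fin 3) ℝ :=
  !![lam ^ 2, x, y; 0, lam⁻¹, 0; 0, 0, lam⁻¹]

def lMat (h : Matrix (Fin 2) (Fin 2) ℝ) (n : Fin 2 → ℝ) : Matrix (Fin 3) (Fin 3) ℝ :=
  !![h.det, 0, 0; n 0, h 0 0, h 0 1; n 1, h 1 0, h 1 1]

theorem mem_Uset {m : Matrix (Fin 3) (Fin 3) ℝ} :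
    m ∈ Uset ↔ ∃ lam x y, 0 < lam ∧ m = uMat lam x y :=
  Iff.rfl

theorem mem_Lset {m : Matrix (Fin 3) (Fin 3) ℝ} :
    m ∈ Lset ↔ ∃ h n, |h.det| = 1 ∧ m = lMat h n := by
  simp_rw [abs_eq zero_le_one]
  rfl

section

variable {lam x y : ℝ} {h : Matrix (Fin 2) (Fin 2) ℝ} {n : Fin 2 → ℝ}

theorem det_uMat (hlam : lam ≠ 0) : (uMat lam x y).det = 1 := by
  simp [uMat, det_fin_three, sq, hlam]

theorem det_lMat : (lMat h n).det = h.det ^ 2 := by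
  rw [lMat, det_fin_three, det_fin_two, sq]
  simp only [of_apply, cons_val', cons_val_zero, cons_val_one, cons_val_fin_one, cons_val]
  ring

theorem uMat_mul_lMat_zero_succ (j : Fin 2) :
    (uMat lam x y * lMat h n) 0 j.succ = (![x, y] ᵥ* h) j := by
  fin_cases j <;> simp [uMat, lMat, vecMul, dotProduct]

theorem uMat_mul_lMat_succ_zero (i : Fin 2) :
    (uMat lam x y * lMat h n) i.succ 0 = lam⁻¹ * n i := by
  fin_cases i <;> simp [uMat, lMat]

theorem uMat_mul_lMat_succ_succ (i j : Fin 2) :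
    (uMat lam x y * lMat h n) i.succ j.succ = lam⁻¹ * h i j := by
  fin_cases i <;> fin_cases j <;> simp [uMat, lMat]

theorem submatrix_uMat_mul_lMat :
    (uMat lam x y * lMat h n).submatrix Fin.succ Fin.succ = lam⁻¹ • h :=
  ext uMat_mul_lMat_succ_succ

theorem uMat_mul_lMat_injective {lam' x' y' : ℝ} {h' : Matrix (Fin 2) (Fin 2) ℝ} {n' : Fin 2 → ℝ}
    (hlam : 0 < lam) (hlam' : 0 < lam') (hh : |h.det| = 1) (hh' : |h'.det| = 1)
    (heq : uMat lam x y * lMat h n = uMat lam' x' y' * lMat h' n') :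
    lam = lam' ∧ x = x' ∧ y = y' ∧ h = h' ∧ n = n' := by
  have hblock : lam⁻¹ • h = lam'⁻¹ • h' := by
    simpa only [submatrix_uMat_mul_lMat] using congrArg (·.submatrix Fin.succ Fin.succ) heq
  obtain rfl : lam = lam' := by
    have hdet := congrArg (|·.det|) hblock
    simp only [det_smul, Fintype.card_fin, abs_mul, hh, hh', mul_one, abs_pow,
      abs_of_pos (inv_pos.mpr hlam), abs_of_pos (inv_pos.mpr hlam')] at hdet
    rwa [pow_left_inj₀ (inv_pos.mpr hlam).le (inv_pos.mpr hlam').le two_ne_zero,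
      _root_.inv_inj] at hdet
  obtain rfl : h = h' := smul_right_injective _ (inv_ne_zero hlam.ne') hblock
  obtain rfl : n = n' := funext fun i => mul_left_cancel₀ (inv_ne_zero hlam.ne') <| by
    simpa only [uMat_mul_lMat_succ_zero] using congrFun₂ heq i.succ 0
  have hxy : ![x, y] = ![x', y'] := by
    have hunit : IsUnit h := (isUnit_iff_isUnit_det h).mpr <|
      isUnit_iff_ne_zero.mpr (abs_ne_zero.mp (hh.symm ▸ one_ne_zero))
    refine vecMul_injective_of_isUnit hunit (funext fun j => ?_)
    simpa only [uMat_mul_lMat_zero_succ] using congrFun₂ heq 0 j.succ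
  exact ⟨rfl, congrFun hxy 0, congrFun hxy 1, rfl, rfl⟩

theorem exists_uMat_mul_lMat_eq {g : Matrix (Fin 3) (Fin 3) ℝ} (hg : g.det = 1)
    (hc : (g.submatrix Fin.succ Fin.succ).det ≠ 0) :
    ∃ lam x y h n, 0 < lam ∧ |h.det| = 1 ∧ g = uMat lam x y * lMat h n := by
  set c := (g.submatrix Fin.succ Fin.succ).det
  set lam := (√|c|)⁻¹
  have hlam : 0 < lam := inv_pos.mpr (Real.sqrt_pos.mpr (abs_pos.mpr hc))
  have hlam_sq : lam ^ 2 * |c| = 1 := by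
    rw [inv_pow, Real.sq_sqrt (abs_nonneg c), inv_mul_cancel₀ (abs_ne_zero.mpr hc)]
  set h := lam • g.submatrix Fin.succ Fin.succ
  have hh : |h.det| = 1 := by
    rw [det_smul, Fintype.card_fin, abs_mul, abs_pow, abs_of_pos hlam, hlam_sq]
  set v := (fun j => g 0 j.succ) ᵥ* h⁻¹
  refine ⟨lam, v 0, v 1, h, lam • fun i => g i.succ 0, hlam, hh, ?_⟩
  refine eq_of_det_eq_of_succ_rows_eq ?_ hc (fun i j => ?_) (fun j => ?_)
  · rw [hg, det_mul, det_uMat hlam.ne', det_lMat, ← sq_abs, hh, one_pow, one_mul]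
  · refine Fin.cases ?_ (fun j => ?_) j
    · simp [uMat_mul_lMat_succ_zero, hlam.ne']
    · simp [uMat_mul_lMat_succ_succ, h, hlam.ne']
  · have hv : ![v 0, v 1] = v := by ext i; fin_cases i <;> rfl
    have hdet : IsUnit h.det :=
      isUnit_iff_ne_zero.mpr (abs_ne_zero.mp (hh.symm ▸ one_ne_zero))
    rw [uMat_mul_lMat_zero_succ, hv, vecMul_vecMul, nonsing_inv_mul _ hdet, vecMul_one]

end

theorem UL_decomposition_of_SL3
    -- the product set UL equals {g ∈ SL₃(ℝ) : g⁻¹E₁ ∉ E₁^⊥}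
    : (∀ g : Matrix (Fin 3) (Fin 3) ℝ, g.det = 1 →
        ((∃ u ∈ Uset, ∃ l ∈ Lset, g = u * l) ↔ g⁻¹ 0 0 ≠ 0)) ∧
      -- uniqueness of the decomposition (U ∩ L = {Id})
      (∀ u ∈ Uset, ∀ u' ∈ Uset, ∀ l ∈ Lset, ∀ l' ∈ Lset,
        u * l = u' * l' → u = u' ∧ l = l') := by
  refine ⟨fun g hg => ?_, ?_⟩
  · rw [inv_apply_zero_zero, hg, inv_one, one_mul]
    constructor
    · rintro ⟨u, hu, l, hl, rfl⟩
      obtain ⟨lam, x, y, hlam, rfl⟩ := mem_Uset.mp hu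
      obtain ⟨h, n, hh, rfl⟩ := mem_Lset.mp hl
      rw [submatrix_uMat_mul_lMat, det_smul]
      exact mul_ne_zero (by positivity) (abs_ne_zero.mp (hh.symm ▸ one_ne_zero))
    · intro hc
      obtain ⟨lam, x, y, h, n, hlam, hh, rfl⟩ := exists_uMat_mul_lMat_eq hg hc
      exact ⟨_, mem_Uset.mpr ⟨lam, x, y, hlam, rfl⟩, _, mem_Lset.mpr ⟨h, n, hh, rfl⟩, rfl⟩
  · intro u hu u' hu' l hl l' hl' heq
    obtain ⟨lam, x, y, hlam, rfl⟩ := mem_Uset.mp hu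
    obtain ⟨lam', x', y', hlam', rfl⟩ := mem_Uset.mp hu'
    obtain ⟨h, n, hh, rfl⟩ := mem_Lset.mp hl
    obtain ⟨h', n', hh', rfl⟩ := mem_Lset.mp hl'
    obtain ⟨rfl, rfl, rfl, rfl, rfl⟩ := uMat_mul_lMat_injective hlam hlam' hh hh' heq
    exact ⟨rfl, rfl⟩
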